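/- arXiv:2509.01629 — 2 statements merged into one kernel-verified Lean document; each statement's English description precedes it below -/
import Mathlib

section
/- With the linear schedule α_t = 1−t, β_t = t, and x₁ ~ N(0,M) with M > 1, the averaged squared Lipschitzness A₂ = ∫₀¹ ((t−1 + tM)/((1−t)² + t²M))² dt is bounded below by c√M for a universal constant c > 0 and all M sufficiently large. -/
/-!
On the window `t ∈ [1/√M, 2/√M]` the drift slope `(t - 1 + tM)/((1 - t)² + t²M)` is at least
`√M/10`: the numerator is of order `√M` while the denominator stays below `5`. Squaring, the
integrand is at least `M/100` on a window of length `1/√M`, which contributes `√M/100`.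
-/

open Real Set

lemma mul_le_intervalIntegral_of_le_on_Icc {f : ℝ → ℝ} {a b c d m : ℝ}
    (hca : c ≤ a) (hab : a ≤ b) (hbd : b ≤ d) (hf : IntervalIntegrable f MeasureTheory.volume c d)
    (hf_nonneg : ∀ t ∈ Icc c d, 0 ≤ f t) (hm : ∀ t ∈ Icc a b, m ≤ f t) :
    (b - a) * m ≤ ∫ t in c..d, f t := by
  have hf_ab : IntervalIntegrable f MeasureTheory.volume a b :=
    hf.mono_set <| by
      rw [uIcc_of_le hab, uIcc_of_le (hca.trans (hab.trans hbd))]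
      exact Icc_subset_Icc hca hbd
  calc (b - a) * m = ∫ _ in a..b, m := by simp
    _ ≤ ∫ t in a..b, f t := intervalIntegral.integral_mono_on hab intervalIntegrable_const hf_ab hm
    _ ≤ ∫ t in c..d, f t := intervalIntegral.integral_mono_interval hca hab hbd
        ((MeasureTheory.ae_restrict_mem measurableSet_Ioc).mono fun t ht =>
          hf_nonneg t (Ioc_subset_Icc_self ht)) hf

lemma linearSchedule_denom_pos {M : ℝ} (hM : 0 < M) (t : ℝ) : 0 < (1 - t) ^ 2 + t ^ 2 * M := by
  rcases eq_or_ne t 0 with rfl | ht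
  · norm_num
  · nlinarith [sq_nonneg (1 - t), mul_pos (sq_pos_of_ne_zero ht) hM]

lemma div_ten_le_driftSlope {s t : ℝ} (hs : 1 ≤ s) (ht : t ∈ Icc (1 / s) (2 / s)) :
    s / 10 ≤ (t - 1 + t * s ^ 2) / ((1 - t) ^ 2 + t ^ 2 * s ^ 2) := by
  have hs0 : 0 < s := by linarith
  obtain ⟨hlo, hhi⟩ := ht
  have hts_lo : 1 ≤ t * s := (div_le_iff₀ hs0).mp hlo
  have hts_hi : t * s ≤ 2 := (le_div_iff₀ hs0).mp hhi
  have ht0 : 0 ≤ t := by nlinarith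
  have ht2 : t ≤ 2 := by nlinarith
  have hnum : s / 2 ≤ t - 1 + t * s ^ 2 := by nlinarith [sq_nonneg (s - 1)]
  have hden : (1 - t) ^ 2 + t ^ 2 * s ^ 2 ≤ 5 := by nlinarith
  calc s / 10 = (s / 2) / 5 := by ring
    _ ≤ _ := div_le_div₀ (by linarith) hnum (linearSchedule_denom_pos (by positivity) t) hden

/-- With the linear schedule `α t = 1 − t`, `β t = t`, and `x₁ ~ N(0,M)` with `M > 1`, the
averaged squared Lipschitzness `A₂ = ∫₀¹ ((t−1+tM)/((1−t)²+t²M))² dt` is bounded below by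
`c √M` for a universal constant `c > 0` and all `M` sufficiently large. -/
theorem stmt7 :
    ∃ c > (0 : ℝ), ∃ M₀ : ℝ, 1 < M₀ ∧ ∀ M : ℝ, M₀ ≤ M →
      c * Real.sqrt M ≤
        ∫ t in (0 : ℝ)..1, ((t - 1 + t * M) / ((1 - t) ^ 2 + t ^ 2 * M)) ^ 2 := by
  refine ⟨1 / 100, by norm_num, 4, by norm_num, fun M hM => ?_⟩
  set s := √M
  have hs : 2 ≤ s := by
    simpa using Real.sqrt_le_sqrt (show (2 : ℝ) ^ 2 ≤ M by linarith)
  have hs0 : 0 < s := by linarith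
  have hM_eq : M = s ^ 2 := (Real.sq_sqrt (by linarith)).symm
  rw [hM_eq]
  have hcont : Continuous fun t : ℝ => ((t - 1 + t * s ^ 2) / ((1 - t) ^ 2 + t ^ 2 * s ^ 2)) ^ 2 :=
    (Continuous.div (by fun_prop) (by fun_prop)
      fun t => (linearSchedule_denom_pos (by positivity) t).ne').pow 2
  calc 1 / 100 * s = (2 / s - 1 / s) * (s / 10) ^ 2 := by field_simp; ring
    _ ≤ _ := mul_le_intervalIntegral_of_le_on_Icc (by positivity)
        (by gcongr; norm_num) ((div_le_one hs0).mpr hs) (hcont.intervalIntegrable 0 1)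
        (fun t _ => sq_nonneg _)
        (fun t ht => pow_le_pow_left₀ (by positivity) (div_ten_le_driftSlope (by linarith) ht) 2)
end

section
/- If I has density ρ(x) = (1/√(2π)) exp(−(x² + m²)/2) cosh(h + mx)/cosh(h) for constants m ∈ ℝ and h ∈ ℝ, then E[I · tanh(h + mI)] = m. -/
open Real
open MeasureTheory

lemma odd0 : ∫ x : ℝ, x * exp (-x^2/2) = 0 := by
  have h := integral_neg_eq_self (fun x : ℝ => x * exp (-x^2/2)) volume
  simp only [neg_neg, neg_sq, neg_mul] at h
  rw [integral_neg] at h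
  linarith

lemma gint : ∫ x : ℝ, exp (-x^2/2) = Real.sqrt (2*π) := by
  have := integral_gaussian ((1:ℝ)/2)
  rw [div_div_eq_mul_div, div_one] at this
  rw [mul_comm π 2] at this
  rw [← this]
  congr 1; ext x; ring_nf

lemma hint : Integrable (fun x : ℝ => x * exp (-x^2/2)) := by
  have := integrable_mul_exp_neg_mul_sq (b := (1:ℝ)/2) (by norm_num)
  convert this using 2 with x
  ring_nf

lemma gintble : Integrable (fun x : ℝ => exp (-x^2/2)) := by
  have := integrable_exp_neg_mul_sq (b := (1:ℝ)/2) (by norm_num)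
  convert this using 2 with x; ring_nf

lemma moment1 (c : ℝ) : ∫ x : ℝ, x * exp (-(x-c)^2/2) = c * Real.sqrt (2*π) := by
  have h := integral_add_right_eq_self (μ := volume) (fun x : ℝ => x * exp (-(x-c)^2/2)) c
  simp only [add_sub_cancel_right] at h
  rw [← h]
  have : ∀ x : ℝ, (x + c) * exp (-x^2/2) = x * exp (-x^2/2) + c * exp (-x^2/2) := fun x => by ring
  simp_rw [this]
  rw [integral_add hint (gintble.const_mul c), odd0, integral_const_mul, gint, zero_add]

lemma mint (c : ℝ) : Integrable (fun x : ℝ => x * exp (-(x-c)^2/2)) := by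
  have h1 : Integrable (fun x : ℝ => (x+c) * exp (-x^2/2)) :=
    (hint.add (gintble.const_mul c)).congr (Filter.Eventually.of_forall fun x => by
      simp [add_mul])
  have h2 := h1.comp_add_right (-c)
  exact h2.congr (Filter.Eventually.of_forall fun x => by ring_nf)


/-- If `I` has density `ρ(x) = (1/√(2π)) exp(−(x² + m²)/2) cosh(h + mx)/cosh h` for
constants `m, h ∈ ℝ`, then `E[I tanh(h + mI)] = ∫ x tanh(h + mx) ρ(x) dx = m`. -/
theorem stmt12 (m h : ℝ) :
    ∫ x : ℝ, x * Real.tanh (h + m * x) *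
      ((1 / Real.sqrt (2 * π)) * exp (-(x ^ 2 + m ^ 2) / 2) *
        Real.cosh (h + m * x) / Real.cosh h) = m := by
  set s := Real.sqrt (2 * π) with hs
  have hs0 : 0 < s := Real.sqrt_pos.mpr (by positivity)
  clear_value s
  have hch : 0 < Real.cosh h := Real.cosh_pos h
  set A := Real.exp h / (2 * s * Real.cosh h) with hA
  set B := Real.exp (-h) / (2 * s * Real.cosh h) with hB
  have key : ∀ x : ℝ, x * Real.tanh (h + m * x) *
      ((1 / s) * exp (-(x ^ 2 + m ^ 2) / 2) * Real.cosh (h + m * x) / Real.cosh h)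
      = A * (x * exp (-(x - m)^2/2)) - B * (x * exp (-(x - (-m))^2/2)) := by
    intro x
    have hcv : Real.cosh (h + m * x) ≠ 0 := (Real.cosh_pos (h + m * x)).ne'
    have ht : Real.tanh (h + m * x) * Real.cosh (h + m * x) = Real.sinh (h + m * x) := by
      rw [Real.tanh_eq_sinh_div_cosh]; field_simp
    have e1 : exp (-(x^2+m^2)/2) * exp (h+m*x) = exp h * exp (-(x-m)^2/2) := by
      rw [← Real.exp_add, ← Real.exp_add]; congr 1; ring
    have e2 : exp (-(x^2+m^2)/2) * exp (-(h+m*x)) = exp (-h) * exp (-(x-(-m))^2/2) := by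
      rw [← Real.exp_add, ← Real.exp_add]; congr 1; ring
    have step1 : x * Real.tanh (h + m * x) *
        ((1 / s) * exp (-(x ^ 2 + m ^ 2) / 2) * Real.cosh (h + m * x) / Real.cosh h)
        = (x / (2 * s * Real.cosh h)) * (exp (-(x^2+m^2)/2) * exp (h+m*x))
          - (x / (2 * s * Real.cosh h)) * (exp (-(x^2+m^2)/2) * exp (-(h+m*x))) := by
      rw [show x * Real.tanh (h + m * x) *
          ((1 / s) * exp (-(x ^ 2 + m ^ 2) / 2) * Real.cosh (h + m * x) / Real.cosh h)
          = x * (Real.tanh (h + m * x) * Real.cosh (h + m * x)) * exp (-(x ^ 2 + m ^ 2) / 2)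
            / (s * Real.cosh h) from by ring, ht, Real.sinh_eq]
      ring
    rw [step1, e1, e2, hA, hB]
    ring
  simp_rw [key]
  rw [integral_sub ((mint m).const_mul A) ((mint (-m)).const_mul B),
    integral_const_mul, integral_const_mul, moment1, moment1]
  rw [hA, hB, Real.cosh_eq]
  rw [← hs]
  field_simp
  ring
end
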